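/- Let N ≥ 2 be an integer, b ∈ ℝ², and let f : ℝ² → ℝ be continuously differentiable. Let h(ξ) = |ξ + b|² and k(ξ) = |ξ|². Then the polygon–center operator intertwines the shifted and unshifted rotation generators: for every ξ ∈ ℝ², Σ_{l=1}^{N} {h, f}(Q_l ξ − b) = {k, V_b f}(ξ), i.e. V_b({|T_b ·|², f}) = {|·|², V_b f} pointwise. -/

import Mathlib

open Real Finset

/-- The Poisson bracket `{g, f} = ∂₁g ∂₂f - ∂₂g ∂₁f` on the plane identified with `ℂ`,
where `∂₁` (resp. `∂₂`) is the derivative in the direction `1` (resp. `I`). -/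
noncomputable def pb (g f : ℂ → ℝ) (x : ℂ) : ℝ :=
  fderiv ℝ g x 1 * fderiv ℝ f x Complex.I - fderiv ℝ g x Complex.I * fderiv ℝ f x 1

/-- The polygon–center operator `(V_b f)(ξ) = ∑_{l=1}^{N} f(Q_l ξ - b)`, where the
rotation `Q_l` by angle `2πl/N` is multiplication by `exp(2πi/N)^l`. -/
noncomputable def Vop (N : ℕ) (b : ℂ) (f : ℂ → ℝ) (ξ : ℂ) : ℝ :=
  ∑ l ∈ Finset.Icc 1 N, f ((Complex.exp (2 * π * Complex.I / N)) ^ l * ξ - b)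

open Complex

/-!
Bracketing with `|η + b|²` is the angular derivative about `-b`:
`{|· + b|², f}(x) = 2 Df(x)(i (x + b))`. The summand `ξ ↦ f(cξ - b)` of `V_b f` has derivative
`Df(cξ - b) ∘ (c ·)`, and multiplication by `c` commutes with multiplication by `i`, so its
bracket with `|·|²` at `ξ` is the bracket of `f` with `|· + b|²` at `cξ - b`. Summing over
the rotations `c = Q_l` gives the identity.
-/

lemma fderiv_norm_add_sq_apply (b x v : ℂ) :
    fderiv ℝ (fun η : ℂ => ‖η + b‖ ^ 2) x v = 2 * ((x + b).re * v.re + (x + b).im * v.im) := by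
  have h : HasFDerivAt (fun η : ℂ => ‖η + b‖ ^ 2) _ x :=
    ((hasFDerivAt_id x).add_const b).norm_sq
  rw [h.fderiv]
  simp only [id_eq, map_add, ContinuousLinearMap.comp_id, add_apply, smul_apply, coe_innerSL_apply,
    Complex.inner, mul_re, conj_re, conj_im, nsmul_eq_mul, Nat.cast_ofNat, add_re, add_im]
  ring

lemma pb_norm_add_sq_left (b : ℂ) (f : ℂ → ℝ) (x : ℂ) :
    pb (fun η => ‖η + b‖ ^ 2) f x = 2 * fderiv ℝ f x (I * (x + b)) := by
  have hrot : I * (x + b) = (x + b).re • I - (x + b).im • (1 : ℂ) := by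
    apply Complex.ext <;> simp
  simp only [pb, fderiv_norm_add_sq_apply, hrot, map_sub, map_smul, smul_eq_mul, one_re, one_im,
    I_re, I_im]
  ring

lemma pb_finset_sum_right {ι : Type*} (g : ℂ → ℝ) (s : Finset ι) (f : ι → ℂ → ℝ) (x : ℂ)
    (hf : ∀ i ∈ s, DifferentiableAt ℝ (f i) x) :
    pb g (fun y => ∑ i ∈ s, f i y) x = ∑ i ∈ s, pb g (f i) x := by
  simp only [pb, fderiv_fun_sum hf, _root_.sum_apply, mul_sum, ← sum_sub_distrib]

lemma pb_norm_sq_comp_mul_sub (f : ℂ → ℝ) (c b ξ : ℂ) (hf : DifferentiableAt ℝ f (c * ξ - b)) :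
    pb (fun η => ‖η‖ ^ 2) (fun ξ => f (c * ξ - b)) ξ = pb (fun η => ‖η + b‖ ^ 2) f (c * ξ - b) := by
  have hcomp : HasFDerivAt (fun ξ => f (c * ξ - b))
      ((fderiv ℝ f (c * ξ - b)).comp (ContinuousLinearMap.mul ℝ ℂ c)) ξ :=
    hf.hasFDerivAt.comp ξ (((ContinuousLinearMap.mul ℝ ℂ c).hasFDerivAt).sub_const b)
  have hcentered := pb_norm_add_sq_left 0 (fun ξ => f (c * ξ - b)) ξ
  simp only [add_zero] at hcentered
  rw [hcentered, pb_norm_add_sq_left, hcomp.fderiv, sub_add_cancel, ContinuousLinearMap.comp_apply,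
    ContinuousLinearMap.mul_apply', mul_left_comm]

theorem Vop_intertwines_rotation_generators_general
    (N : ℕ) (b : ℂ) (f : ℂ → ℝ) (hf : ContDiff ℝ 1 f) :
    ∀ ξ : ℂ,
      (∑ l ∈ Finset.Icc 1 N,
        pb (fun η => ‖η + b‖ ^ 2) f
          ((Complex.exp (2 * π * Complex.I / N)) ^ l * ξ - b)) =
      pb (fun η => ‖η‖ ^ 2) (Vop N b f) ξ := by
  intro ξ
  have hdiff : Differentiable ℝ f := hf.differentiable one_ne_zero
  unfold Vop
  rw [pb_finset_sum_right]
  · exact sum_congr rfl fun l _ => (pb_norm_sq_comp_mul_sub f _ b ξ (hdiff _)).symm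
  · intro l _
    exact (hdiff _).comp ξ (by fun_prop)

/-- The polygon–center operator intertwines the shifted and unshifted rotation
generators: `V_b({|T_b ·|², f}) = {|·|², V_b f}` pointwise, for `f` of class `C¹`. -/
theorem Vop_intertwines_rotation_generators
    (N : ℕ) (hN : 2 ≤ N) (b : ℂ) (f : ℂ → ℝ) (hf : ContDiff ℝ 1 f) :
    ∀ ξ : ℂ,
      (∑ l ∈ Finset.Icc 1 N,
        pb (fun η => ‖η + b‖ ^ 2) f
          ((Complex.exp (2 * π * Complex.I / N)) ^ l * ξ - b)) =
      pb (fun η => ‖η‖ ^ 2) (Vop N b f) ξ :=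
  Vop_intertwines_rotation_generators_general N b f hf
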